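/- Backward move B1: If (α_n)_{n≥0}, (β_n)_{n≥0} form a Bailey pair with respect to base a, where a ≠ 0 and a q^m ≠ 1 for all m ≥ 1, then the sequences β'_n = (−1)^n a^{−n} q^{−n²} Σ_{j=0}^{n} (−1)^j (q^{binom(n−j,2)} / (q;q)_{n−j}) β_j and α'_n = a^{−n} q^{−n²} α_n also form a Bailey pair with respect to base a, where binom(m,2) = m(m−1)/2. -/

import Mathlib

open Finset

noncomputable def qPoch (a q : ℂ) (n : ℕ) : ℂ :=
  ∏ t ∈ Finset.range n, (1 - a * q ^ t)

noncomputable def qPochInf (a q : ℂ) : ℂ :=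
  ∏' t : ℕ, (1 - a * q ^ t)

def IsBaileyPair (q a : ℂ) (α β : ℕ → ℂ) : Prop :=
  ∀ n : ℕ, β n =
    ∑ t ∈ Finset.range (n + 1), α t / (qPoch q q (n - t) * qPoch (a * q) q (n + t))

/-!
Substituting the Bailey relation for `β` into `β'_n` and interchanging the two sums, the
coefficient of `α_t` in `β'_n`, with `n = t + m` and `c = a q^(2t)`, reduces to the terminating
identity
  `∑ₖ (-1)^k q^C(m-k,2) [m,k]_q (c q^(k+1); q)_(m-k) = (-1)^m c^m q^(m²)`,
a q-analogue of `∑ₖ (-1)^k C(m,k) (1-c)^(m-k) = (-c)^m`. It follows by induction on `m` from the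
q-Pascal rule, which turns the sum for `m + 1` into `q^m (1 - c q^(m+1))` times the sum for `m`
minus the sum for `m` at `c q`. The prefactor `a^(-n) q^(-n²)` then turns the resulting
`a^m q^(m² + 2tm)` into `a^(-t) q^(-t²)`.
-/

lemma qPoch_zero (a q : ℂ) : qPoch a q 0 = 1 :=
  prod_range_zero _

lemma qPoch_succ (a q : ℂ) (n : ℕ) : qPoch a q (n + 1) = qPoch a q n * (1 - a * q ^ n) :=
  prod_range_succ _ _

lemma qPoch_add (a q : ℂ) (m n : ℕ) :
    qPoch a q (m + n) = qPoch a q m * qPoch (a * q ^ m) q n := by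
  simp only [qPoch, prod_range_add, pow_add, mul_assoc]

lemma qPoch_ne_zero_iff {a q : ℂ} {n : ℕ} : qPoch a q n ≠ 0 ↔ ∀ t < n, a * q ^ t ≠ 1 := by
  rw [qPoch, prod_ne_zero_iff]
  simp only [mem_range, sub_ne_zero, ne_comm (a := (1 : ℂ))]

lemma qPoch_self_ne_zero {q : ℂ} (hq : ‖q‖ < 1) (n : ℕ) : qPoch q q n ≠ 0 :=
  qPoch_ne_zero_iff.2 fun t _ h => by
    have := congrArg norm h
    rw [← pow_succ', norm_pow, norm_one] at this
    exact (pow_lt_one₀ (norm_nonneg q) hq t.succ_ne_zero).ne this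

lemma qPoch_mul_self_ne_zero {a q : ℂ} (ha : ∀ m : ℕ, 1 ≤ m → a * q ^ m ≠ 1) (n : ℕ) :
    qPoch (a * q) q n ≠ 0 :=
  qPoch_ne_zero_iff.2 fun t _ => by
    rw [mul_assoc, ← pow_succ']
    exact ha _ t.succ_pos

noncomputable def qBinom (q : ℂ) : ℕ → ℕ → ℂ
  | _, 0 => 1
  | 0, _ + 1 => 0
  | m + 1, k + 1 => q ^ (k + 1) * qBinom q m (k + 1) + qBinom q m k

@[simp]
lemma qBinom_zero_right (q : ℂ) (m : ℕ) : qBinom q m 0 = 1 := by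
  cases m <;> rfl

lemma qBinom_succ_succ (q : ℂ) (m k : ℕ) :
    qBinom q (m + 1) (k + 1) = q ^ (k + 1) * qBinom q m (k + 1) + qBinom q m k :=
  rfl

lemma qBinom_of_lt (q : ℂ) {m k : ℕ} (h : m < k) : qBinom q m k = 0 := by
  induction m generalizing k with
  | zero => obtain ⟨k, rfl⟩ := Nat.exists_eq_succ_of_ne_zero h.ne'; rfl
  | succ m ih =>
    obtain ⟨k, rfl⟩ := Nat.exists_eq_succ_of_ne_zero (Nat.zero_lt_of_lt h).ne'
    rw [qBinom_succ_succ, ih (by omega), ih (by omega), mul_zero, add_zero]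

@[simp]
lemma qBinom_self (q : ℂ) (m : ℕ) : qBinom q m m = 1 := by
  induction m with
  | zero => rfl
  | succ m ih => rw [qBinom_succ_succ, qBinom_of_lt q m.lt_succ_self, ih, mul_zero, zero_add]

lemma qBinom_add_mul_qPoch (q : ℂ) (k d : ℕ) :
    qBinom q (k + d) k * qPoch q q k * qPoch q q d = qPoch q q (k + d) := by
  induction k generalizing d with
  | zero => simp [qPoch_zero]
  | succ k ihk =>
    induction d with
    | zero => simp [qPoch_zero]
    | succ d ihd =>
      have hk := ihk (d + 1)
      rw [show k + (d + 1) = k + 1 + d by omega] at hk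
      rw [show k + 1 + (d + 1) = k + 1 + d + 1 by omega, qBinom_succ_succ]
      rw [qPoch_succ q q k] at ihd
      rw [qPoch_succ q q d] at hk
      rw [qPoch_succ q q (k + 1 + d), qPoch_succ q q d, qPoch_succ q q k]
      linear_combination (q ^ (k + 1) * (1 - q * q ^ d)) * ihd + (1 - q * q ^ k) * hk

lemma Nat.succ_choose_two (n : ℕ) : (n + 1).choose 2 = n.choose 2 + n := by
  rw [Nat.choose_succ_succ', Nat.choose_one_right, add_comm]

noncomputable def inversionSum (q b : ℂ) (m : ℕ) : ℂ :=
  ∑ k ∈ range (m + 1),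
    (-1) ^ k * q ^ ((m - k).choose 2) * qBinom q m k * qPoch (b * q ^ (k + 1)) q (m - k)

lemma inversionSum_succ (q b : ℂ) (m : ℕ) :
    inversionSum q b (m + 1) =
      q ^ m * (1 - b * q ^ (m + 1)) * inversionSum q b m - inversionSum q (b * q) m := by
  have hpascal : ∀ k ∈ range (m + 1),
      (-1) ^ (k + 1) * q ^ ((m + 1 - (k + 1)).choose 2) * qBinom q (m + 1) (k + 1) *
          qPoch (b * q ^ (k + 1 + 1)) q (m + 1 - (k + 1)) =
        (-1) ^ (k + 1) * q ^ ((m - k).choose 2) * q ^ (k + 1) * qBinom q m (k + 1) *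
            qPoch (b * q ^ (k + 2)) q (m - k) -
          (-1) ^ k * q ^ ((m - k).choose 2) * qBinom q m k * qPoch (b * q * q ^ (k + 1)) q (m - k) := by
    intro k _
    rw [Nat.add_sub_add_right, qBinom_succ_succ, mul_assoc b q, ← pow_succ']
    ring
  have hshift :
      ∑ k ∈ range (m + 1), (-1) ^ (k + 1) * q ^ ((m - k).choose 2) * q ^ (k + 1) *
          qBinom q m (k + 1) * qPoch (b * q ^ (k + 2)) q (m - k) +
        q ^ ((m + 1).choose 2) * qPoch (b * q) q (m + 1) =
      q ^ m * (1 - b * q ^ (m + 1)) * inversionSum q b m := by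
    rw [inversionSum, mul_sum]
    conv_lhs => rw [sum_range_succ, qBinom_of_lt q m.lt_succ_self, mul_zero, zero_mul, add_zero]
    conv_rhs => rw [sum_range_succ']
    congr 1
    · refine sum_congr rfl fun k hk => ?_
      obtain ⟨j, rfl⟩ := Nat.exists_eq_add_of_lt (mem_range.1 hk)
      rw [show k + j + 1 - k = j + 1 by omega, show k + j + 1 - (k + 1) = j by omega,
        Nat.succ_choose_two, qPoch_succ]
      ring
    · rw [Nat.succ_choose_two, qPoch_succ]
      simp only [pow_zero, tsub_zero, one_mul, qBinom_zero_right, mul_one, zero_add, pow_one]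
      ring
  rw [inversionSum, sum_range_succ', sum_congr rfl hpascal, sum_sub_distrib, sub_add_eq_add_sub,
    ← hshift]
  simp only [inversionSum, pow_zero, tsub_zero, one_mul, qBinom_zero_right, mul_one, zero_add,
    pow_one]

lemma inversionSum_eq (q b : ℂ) (m : ℕ) : inversionSum q b m = (-1) ^ m * b ^ m * q ^ (m ^ 2) := by
  induction m generalizing b with
  | zero => simp [inversionSum, qPoch_zero]
  | succ m ih => rw [inversionSum_succ, ih, ih]; ring

lemma sum_div_qPoch_eq {q c : ℂ} {m : ℕ} (hq : qPoch q q m ≠ 0) (hc : qPoch (c * q) q m ≠ 0) :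
    ∑ k ∈ range (m + 1), (-1) ^ k * q ^ ((m - k).choose 2) /
        (qPoch q q (m - k) * qPoch q q k * qPoch (c * q) q k) =
      (-1) ^ m * c ^ m * q ^ (m ^ 2) / (qPoch q q m * qPoch (c * q) q m) := by
  rw [← inversionSum_eq, inversionSum, sum_div]
  refine sum_congr rfl fun k hk => ?_
  obtain ⟨d, rfl⟩ := Nat.exists_eq_add_of_le (mem_range_succ_iff.1 hk)
  rw [Nat.add_sub_cancel_left]
  rw [qPoch_add (c * q) q k d, mul_assoc c, ← pow_succ'] at hc ⊢
  rw [← qBinom_add_mul_qPoch q k d] at hq ⊢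
  have hqb : qBinom q (k + d) k ≠ 0 := left_ne_zero_of_mul (left_ne_zero_of_mul hq)
  have hcd : qPoch (c * q ^ (k + 1)) q d ≠ 0 := right_ne_zero_of_mul hc
  field_simp

lemma qPoch_mul_self_add (a q : ℂ) (s k : ℕ) :
    qPoch (a * q) q (s + k) = qPoch (a * q) q s * qPoch (a * q ^ s * q) q k := by
  rw [qPoch_add, mul_right_comm a q]

theorem IsBaileyPair.alternating_sum_eq {q a : ℂ} {α β : ℕ → ℂ} (h : IsBaileyPair q a α β)
    (hq : ∀ n, qPoch q q n ≠ 0) (ha : ∀ n, qPoch (a * q) q n ≠ 0) (n : ℕ) :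
    ∑ j ∈ range (n + 1), (-1) ^ j * (q ^ ((n - j).choose 2) / qPoch q q (n - j)) * β j =
      ∑ t ∈ range (n + 1), (-1) ^ n * a ^ (n - t) * q ^ ((n - t) ^ 2 + 2 * t * (n - t)) * α t /
        (qPoch q q (n - t) * qPoch (a * q) q (n + t)) := by
  set F : ℕ → ℕ → ℂ := fun t k => (-1) ^ (t + k) *
    (q ^ ((n - (t + k)).choose 2) / qPoch q q (n - (t + k))) *
      (α t / (qPoch q q k * qPoch (a * q) q (t + k + t)))
  calc _ = ∑ j ∈ range (n + 1), ∑ t ∈ range (j + 1), F t (j - t) := by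
        refine sum_congr rfl fun j _ => ?_
        rw [h j, mul_sum]
        refine sum_congr rfl fun t ht => ?_
        simp only [F, Nat.add_sub_cancel' (mem_range_succ_iff.1 ht)]
    _ = ∑ t ∈ range (n + 1), ∑ k ∈ range (n + 1 - t), F t k := sum_range_diag_flip _ _
    _ = _ := by
        refine sum_congr rfl fun t ht => ?_
        obtain ⟨m, rfl⟩ := Nat.exists_eq_add_of_le (mem_range_succ_iff.1 ht)
        have hsplit : ∀ k, qPoch (a * q) q (t + k + t) =
            qPoch (a * q) q (2 * t) * qPoch (a * q ^ (2 * t) * q) q k := fun k => by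
          rw [show t + k + t = 2 * t + k by ring, qPoch_mul_self_add]
        have hcm : qPoch (a * q ^ (2 * t) * q) q m ≠ 0 := right_ne_zero_of_mul (hsplit m ▸ ha _)
        calc ∑ k ∈ range (t + m + 1 - t), F t k
            = (-1) ^ t * α t / qPoch (a * q) q (2 * t) * ∑ k ∈ range (m + 1), (-1) ^ k *
                q ^ ((m - k).choose 2) /
                  (qPoch q q (m - k) * qPoch q q k * qPoch (a * q ^ (2 * t) * q) q k) := by
              rw [mul_sum, show t + m + 1 - t = m + 1 by omega]
              refine sum_congr rfl fun k _ => ?_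
              simp only [F, hsplit, Nat.add_sub_add_left]
              field_simp
              ring
          _ = _ := by
              rw [sum_div_qPoch_eq (hq m) hcm, hsplit m]
              simp only [Nat.add_sub_cancel_left]
              field_simp
              ring

theorem backward_move_B1 (q a : ℂ) (hq0 : 0 < ‖q‖) (hq1 : ‖q‖ < 1)
    (ha0 : a ≠ 0) (ha : ∀ m : ℕ, 1 ≤ m → a * q ^ m ≠ 1)
    (α β : ℕ → ℂ) (h : IsBaileyPair q a α β) :
    IsBaileyPair q a
      (fun n => a ^ (-(n : ℤ)) * q ^ (-(n : ℤ) ^ 2) * α n)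
      (fun n => (-1 : ℂ) ^ n * a ^ (-(n : ℤ)) * q ^ (-(n : ℤ) ^ 2) *
        ∑ j ∈ Finset.range (n + 1),
          (-1 : ℂ) ^ j * (q ^ ((n - j).choose 2) / qPoch q q (n - j)) * β j) := by
  intro n
  dsimp only
  rw [h.alternating_sum_eq (qPoch_self_ne_zero hq1) (qPoch_mul_self_ne_zero ha), mul_sum]
  refine sum_congr rfl fun t ht => ?_
  obtain ⟨m, rfl⟩ := Nat.exists_eq_add_of_le (mem_range_succ_iff.1 ht)
  have hapow : a ^ (-((t + m : ℕ) : ℤ)) * a ^ m = a ^ (-(t : ℤ)) := by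
    rw [← zpow_natCast, ← zpow_add₀ ha0]
    push_cast
    ring_nf
  have hqpow : q ^ (-((t + m : ℕ) : ℤ) ^ 2) * q ^ (m ^ 2 + 2 * t * m) = q ^ (-(t : ℤ) ^ 2) := by
    rw [← zpow_natCast, ← zpow_add₀ (norm_pos_iff.1 hq0)]
    push_cast
    ring_nf
  have hsign : (-1 : ℂ) ^ (t + m) * (-1) ^ (t + m) = 1 := by
    rw [← mul_pow]
    norm_num
  rw [Nat.add_sub_cancel_left, ← hapow, ← hqpow]
  linear_combination (a ^ (-((t + m : ℕ) : ℤ)) * a ^ m * (q ^ (-((t + m : ℕ) : ℤ) ^ 2) *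
    q ^ (m ^ 2 + 2 * t * m)) * α t / (qPoch q q m * qPoch (a * q) q (t + m + t))) * hsign
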